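/- In the setting of gradient-descent training on a feed-forward network as in Definition 4.1, let θ_t^(0) be the GD iterates initialized at θ₀ on the population loss L(·;f), and θ_t^(U) the GD iterates initialized at (Q^(U))ᵀθ₀ on the rotated population loss L^(U)(·;f), with the same stepsize η > 0. Then for every t ≥ 0 and every x ∈ ℝᵈ, f(θ_t^(U); x) = f(θ_t^(0); Uᵀx); consequently the decision boundaries are equivariant: {x ∈ ℝᵈ : f(θ_t^(U); x) = 0} = {Ux : f(θ_t^(0); x) = 0}. -/
import Mathlib


open MeasureTheory Matrix

/-- Index set for the parameter vector `θ ∈ ℝᵖ` of a feed-forward network (Definition 4.1)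
with input dimension `d` and `L+1` hidden layers of widths `m 1, …, m (L+1)` (scalar output).
The five summands index, respectively: the entries of the first-layer weight matrix
`W₁ ∈ ℝ^{m₁×d}`; the entries of the deeper hidden-layer weight matrices
`W_{j+2} ∈ ℝ^{m_{j+2}×m_{j+1}}` for `j < L`; the entries of the hidden-layer bias vectors;
the entries of the output-layer weight (row) vector; and the output bias. -/
abbrev PIdx (d L : ℕ) (m : ℕ → ℕ) : Type :=
  (Fin (m 1) × Fin d) ⊕
  ((j : Fin L) × (Fin (m (j.1 + 2)) × Fin (m (j.1 + 1)))) ⊕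
  ((j : Fin (L + 1)) × Fin (m (j.1 + 1))) ⊕
  Fin (m (L + 1)) ⊕ Unit

/-- The parameter space `ℝᵖ` of the network, presented with coordinates `PIdx d L m`. -/
abbrev PSpace (d L : ℕ) (m : ℕ → ℕ) : Type := PIdx d L m → ℝ

/-- Hidden-layer outputs of the network (Definition 4.1): `hLayer … j` is the output of
hidden layer `j+1`, i.e. `h₁ = x` and `h_{j+1} = σ_{j+1}(W_j h_j + b_j)` entrywise. -/
noncomputable def hLayer (d L : ℕ) (m : ℕ → ℕ) (act : ℕ → ℝ → ℝ) (θ : PSpace d L m)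
    (x : Fin d → ℝ) : (j : ℕ) → Fin (m (j + 1)) → ℝ
  | 0 => fun i =>
      act 1 ((∑ c, θ (Sum.inl (i, c)) * x c)
        + θ (Sum.inr (Sum.inr (Sum.inl ⟨⟨0, Nat.succ_pos L⟩, i⟩))))
  | j + 1 => fun i =>
      if hj : j < L then
        act (j + 2)
          ((∑ c, θ (Sum.inr (Sum.inl ⟨⟨j, hj⟩, (i, c)⟩)) * hLayer d L m act θ x j c)
            + θ (Sum.inr (Sum.inr (Sum.inl ⟨⟨j + 1, by omega⟩, i⟩))))
      else 0

/-- The (scalar-valued) feed-forward network of Definition 4.1: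
`f(θ; x) = W_{L+1} h_L(θ;x) + b_{L+1}`. -/
noncomputable def ffnet (d L : ℕ) (m : ℕ → ℕ) (act : ℕ → ℝ → ℝ) (θ : PSpace d L m)
    (x : Fin d → ℝ) : ℝ :=
  (∑ i, θ (Sum.inr (Sum.inr (Sum.inr (Sum.inl i)))) * hLayer d L m act θ x L i)
    + θ (Sum.inr (Sum.inr (Sum.inr (Sum.inr ()))))

/-- The parameter rotation `Q^(U)` induced by a data-space matrix `U`: it acts on the
`vec(W₁)` coordinates by the block `Uᵀ ⊗ I_{m₁}` (i.e. `W₁ ↦ W₁U`) and is the identity on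
all remaining coordinates. -/
noncomputable def rotQ (d L : ℕ) (m : ℕ → ℕ) (U : Matrix (Fin d) (Fin d) ℝ)
    (θ : PSpace d L m) : PSpace d L m :=
  fun idx =>
    match idx with
    | Sum.inl (i, c) => ∑ c', θ (Sum.inl (i, c')) * U c' c
    | idx => θ idx

/-- The gradient `∇g(θ)` of a function on parameter space, as a vector of partial
derivatives. -/
noncomputable def gradVec (d L : ℕ) (m : ℕ → ℕ) (g : PSpace d L m → ℝ)
    (θ : PSpace d L m) : PSpace d L m :=
  fun i => fderiv ℝ g θ (Pi.single i 1)

/-- The rotated feature-label distribution `D^(U)`: the law of `(Ux, y)` for `(x,y) ~ D`. -/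
noncomputable def rotMeas (d : ℕ) (U : Matrix (Fin d) (Fin d) ℝ)
    (D : Measure ((Fin d → ℝ) × ℝ)) : Measure ((Fin d → ℝ) × ℝ) :=
  D.map (fun q => (U.mulVec q.1, q.2))

/-- The population loss `L(θ; g) = E_{(x,y)~D}[ℓ(y, g(θ;x))]`. -/
noncomputable def popLoss {d : ℕ} {P : Type*} (D : Measure ((Fin d → ℝ) × ℝ))
    (ℓ : ℝ → ℝ → ℝ) (g : P → (Fin d → ℝ) → ℝ) (θ : P) : ℝ :=
  ∫ q, ℓ q.2 (g θ q.1) ∂D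

lemma hLayer_rotQ (d L : ℕ) (m : ℕ → ℕ) (act : ℕ → ℝ → ℝ)
    (M : Matrix (Fin d) (Fin d) ℝ) (θ : PSpace d L m) (x : Fin d → ℝ) :
    ∀ j, hLayer d L m act (rotQ d L m M θ) x j = hLayer d L m act θ (M.mulVec x) j := by
  intro j
  induction j with
  | zero =>
      funext i
      simp only [hLayer, rotQ]
      congr 2
      simp only [Matrix.mulVec, dotProduct, Finset.sum_mul, Finset.mul_sum, mul_assoc]
      exact Finset.sum_comm
  | succ j ih =>
      funext i
      simp only [hLayer, rotQ, ih]

lemma ffnet_rotQ (d L : ℕ) (m : ℕ → ℕ) (act : ℕ → ℝ → ℝ)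
    (M : Matrix (Fin d) (Fin d) ℝ) (θ : PSpace d L m) (x : Fin d → ℝ) :
    ffnet d L m act (rotQ d L m M θ) x = ffnet d L m act θ (M.mulVec x) := by
  simp only [ffnet, hLayer_rotQ, rotQ]

lemma rotQ_rotQ (d L : ℕ) (m : ℕ → ℕ) (M N : Matrix (Fin d) (Fin d) ℝ)
    (θ : PSpace d L m) :
    rotQ d L m M (rotQ d L m N θ) = rotQ d L m (N * M) θ := by
  funext idx
  rcases idx with ⟨i, c⟩ | idx
  · simp only [rotQ, Matrix.mul_apply, Finset.mul_sum, Finset.sum_mul, mul_assoc]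
    exact Finset.sum_comm
  · simp only [rotQ]

lemma rotQ_one (d L : ℕ) (m : ℕ → ℕ) (θ : PSpace d L m) :
    rotQ d L m 1 θ = θ := by
  funext idx
  rcases idx with ⟨i, c⟩ | idx
  · simp [rotQ, Matrix.one_apply]
  · simp only [rotQ]

noncomputable def rotA (d L : ℕ) (m : ℕ → ℕ) (M : Matrix (Fin d) (Fin d) ℝ) :
    PSpace d L m →L[ℝ] PSpace d L m :=
  LinearMap.toContinuousLinearMap
  { toFun := rotQ d L m M
    map_add' := by
      intro a b; funext idx
      rcases idx with ⟨i, c⟩ | idx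
      · simp [rotQ, add_mul, Finset.sum_add_distrib]
      · simp [rotQ]
    map_smul' := by
      intro r a; funext idx
      rcases idx with ⟨i, c⟩ | idx
      · simp [rotQ, Finset.mul_sum, mul_assoc]
      · simp [rotQ] }

lemma rotA_apply (d L : ℕ) (m : ℕ → ℕ) (M : Matrix (Fin d) (Fin d) ℝ)
    (θ : PSpace d L m) : rotA d L m M θ = rotQ d L m M θ := rfl

lemma rotA_single_inl (d L : ℕ) (m : ℕ → ℕ) (M : Matrix (Fin d) (Fin d) ℝ)
    (i : Fin (m 1)) (c : Fin d) :
    rotA d L m M (Pi.single (Sum.inl (i, c) : PIdx d L m) 1)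
      = ∑ c'', M c c'' • (Pi.single (Sum.inl (i, c'')) 1 : PSpace d L m) := by
  funext idx
  rcases idx with ⟨i₀, c₀⟩ | idx
  · simp only [rotA_apply, rotQ, Finset.sum_apply, Pi.smul_apply, Pi.single_apply,
      Sum.inl.injEq, Prod.mk.injEq, smul_eq_mul]
    by_cases hi : i = i₀
    · subst hi
      simp
    · have hi' : ¬ i₀ = i := fun h => hi h.symm
      simp [hi, hi']
  · simp only [rotA_apply, rotQ, Finset.sum_apply, Pi.smul_apply, smul_eq_mul]
    simp [Pi.single_apply]

lemma rotA_single_inr (d L : ℕ) (m : ℕ → ℕ) (M : Matrix (Fin d) (Fin d) ℝ)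
    (q : (PIdx d L m)) (hq : ∀ i c, q ≠ Sum.inl (i, c)) :
    rotA d L m M (Pi.single q 1) = Pi.single q 1 := by
  funext idx
  rcases idx with ⟨i₀, c₀⟩ | idx
  · simp only [rotA_apply, rotQ]
    have h0 : ∀ c', (Pi.single q 1 : PSpace d L m) (Sum.inl (i₀, c')) = 0 := by
      intro c'
      rw [Pi.single_apply, if_neg]
      exact fun h => hq i₀ c' h.symm
    rw [Pi.single_apply, if_neg (fun h => hq i₀ c₀ h.symm)]
    simp [h0]
  · simp only [rotA_apply, rotQ]

lemma gradVec_rot (d L : ℕ) (m : ℕ → ℕ) (g : PSpace d L m → ℝ)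
    (hg : Differentiable ℝ g) (U : Matrix (Fin d) (Fin d) ℝ) (hU : Uᵀ * U = 1)
    (θ : PSpace d L m) :
    gradVec d L m (fun θ' => g (rotQ d L m U θ')) (rotQ d L m Uᵀ θ)
      = rotQ d L m Uᵀ (gradVec d L m g θ) := by
  have hA : (fun θ' => g (rotQ d L m U θ')) = g ∘ (rotA d L m U) := rfl
  have hAθ : rotA d L m U (rotQ d L m Uᵀ θ) = θ := by
    rw [rotA_apply, rotQ_rotQ, hU, rotQ_one]
  have hfd : ∀ v, fderiv ℝ (fun θ' => g (rotQ d L m U θ')) (rotQ d L m Uᵀ θ) v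
      = fderiv ℝ g θ (rotA d L m U v) := by
    intro v
    rw [hA, fderiv_comp _ (by rw [hAθ]; exact hg θ) (rotA d L m U).differentiableAt,
      (rotA d L m U).fderiv, hAθ]
    rfl
  funext idx
  rcases idx with ⟨i, c⟩ | idx
  · show fderiv ℝ _ _ (Pi.single (Sum.inl (i, c) : PIdx d L m) 1) = _
    rw [hfd, rotA_single_inl, map_sum]
    simp only [ContinuousLinearMap.map_smul, smul_eq_mul]
    show _ = ∑ c', gradVec d L m g θ (Sum.inl (i, c')) * Uᵀ c' c
    simp only [gradVec, Matrix.transpose_apply]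
    exact Finset.sum_congr rfl (fun c' _ => mul_comm _ _)
  · show fderiv ℝ _ _ (Pi.single ((Sum.inr idx) : PIdx d L m) 1) = _
    rw [hfd, rotA_single_inr d L m U _ (fun i c h => by simp at h)]
    show _ = gradVec d L m g θ (Sum.inr idx)
    rfl

lemma popLoss_rotMeas (d L : ℕ) (m : ℕ → ℕ) (act : ℕ → ℝ → ℝ)
    (D : Measure ((Fin d → ℝ) × ℝ)) (ℓ : ℝ → ℝ → ℝ) (U : Matrix (Fin d) (Fin d) ℝ)
    (hmeas : ∀ θ : PSpace d L m,
      Measurable (fun q : (Fin d → ℝ) × ℝ => ℓ q.2 (ffnet d L m act θ q.1)))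
    (θ : PSpace d L m) :
    popLoss (rotMeas d U D) ℓ (ffnet d L m act) θ
      = popLoss D ℓ (ffnet d L m act) (rotQ d L m U θ) := by
  have hc : Continuous fun v : Fin d → ℝ => U.mulVec v :=
    (Matrix.mulVecLin U).continuous_of_finiteDimensional
  have hφ : Measurable (fun q : (Fin d → ℝ) × ℝ => (U.mulVec q.1, q.2)) :=
    ((hc.comp continuous_fst).prodMk continuous_snd).measurable
  unfold popLoss rotMeas
  rw [integral_map hφ.aemeasurable ((hmeas θ).aestronglyMeasurable)]
  simp only [ffnet_rotQ]


/-- **GD-trained networks are equivariant to data rotations.**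
Let `θ^(0)` be the GD iterates initialized at `θ₀` on the population loss `L(·;f)`, and
`θ^(U)` the GD iterates initialized at `(Q^(U))ᵀθ₀` on the rotated loss `L^(U)(·;f)`, with
the same stepsize `η`.  Then for every `t` and every `x`,
`f(θ^(U)_t; x) = f(θ^(0)_t; Uᵀx)`; consequently the decision boundaries are equivariant:
`{x : f(θ^(U)_t; x) = 0} = {Ux : f(θ^(0)_t; x) = 0}`. -/
theorem stmt_16 (d L : ℕ) (m : ℕ → ℕ) (act : ℕ → ℝ → ℝ)
    (D : Measure ((Fin d → ℝ) × ℝ)) (ℓ : ℝ → ℝ → ℝ)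
    (U : Matrix (Fin d) (Fin d) ℝ) (hU : Uᵀ * U = 1) (hU' : U * Uᵀ = 1)
    -- the population loss is finite, measurable and differentiable:
    (hmeas : ∀ θ : PSpace d L m,
      Measurable (fun q : (Fin d → ℝ) × ℝ => ℓ q.2 (ffnet d L m act θ q.1)))
    (hint : ∀ θ : PSpace d L m,
      Integrable (fun q : (Fin d → ℝ) × ℝ => ℓ q.2 (ffnet d L m act θ q.1)) D)
    (hdiff : Differentiable ℝ (popLoss D ℓ (ffnet d L m act)))
    -- gradient descent iterates of both runs, with stepsize `η > 0`:
    (η : ℝ) (hη : 0 < η) (θ₀ : PSpace d L m) (θ0seq θUseq : ℕ → PSpace d L m)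
    (h00 : θ0seq 0 = θ₀)
    (h0rec : ∀ t, θ0seq (t + 1)
      = θ0seq t - η • gradVec d L m (popLoss D ℓ (ffnet d L m act)) (θ0seq t))
    (hU0 : θUseq 0 = rotQ d L m Uᵀ θ₀)
    (hUrec : ∀ t, θUseq (t + 1)
      = θUseq t - η • gradVec d L m (popLoss (rotMeas d U D) ℓ (ffnet d L m act)) (θUseq t)) :
    ∀ t : ℕ,
      (∀ x : Fin d → ℝ,
        ffnet d L m act (θUseq t) x = ffnet d L m act (θ0seq t) (Uᵀ.mulVec x))
      ∧ {x : Fin d → ℝ | ffnet d L m act (θUseq t) x = 0}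
          = (fun x => U.mulVec x) '' {x : Fin d → ℝ | ffnet d L m act (θ0seq t) x = 0} := by

  have key : ∀ t, θUseq t = rotQ d L m Uᵀ (θ0seq t) := by
    intro t
    induction t with
    | zero => rw [hU0, h00]
    | succ t ih =>
        rw [hUrec, h0rec, ih]
        have heq : popLoss (rotMeas d U D) ℓ (ffnet d L m act)
            = fun θ' => popLoss D ℓ (ffnet d L m act) (rotQ d L m U θ') :=
          funext fun θ' => popLoss_rotMeas d L m act D ℓ U hmeas θ'
        rw [heq, gradVec_rot d L m _ hdiff U hU]
        show rotA d L m Uᵀ (θ0seq t) - η • rotA d L m Uᵀ (gradVec d L m (popLoss D ℓ (ffnet d L m act)) (θ0seq t)) = _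
        rw [← (rotA d L m Uᵀ).map_smul, ← (rotA d L m Uᵀ).map_sub]
        rfl
  intro t
  have part1 : ∀ x : Fin d → ℝ,
      ffnet d L m act (θUseq t) x = ffnet d L m act (θ0seq t) (Uᵀ.mulVec x) := by
    intro x
    rw [key t, ffnet_rotQ]
  refine ⟨part1, ?_⟩
  ext x
  simp only [Set.mem_setOf_eq, Set.mem_image]
  constructor
  · intro hx
    refine ⟨Uᵀ.mulVec x, by rw [← part1 x]; exact hx, ?_⟩
    rw [Matrix.mulVec_mulVec, hU', Matrix.one_mulVec]
  · rintro ⟨y, hy, rfl⟩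
    rw [part1 (U.mulVec y), Matrix.mulVec_mulVec, hU, Matrix.one_mulVec]
    exact hy
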